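/- For every a ≥ 0, the series ∑_{n=0}^∞ aⁿ / Γ(n/2 + 1) converges and satisfies ∑_{n=0}^∞ aⁿ / Γ(n/2 + 1) ≤ 2·e^{a²}. -/

import Mathlib

open Real MeasureTheory intervalIntegral

private lemma G_pos (k : ℕ) : 0 < Real.Gamma ((k : ℝ) + 3/2) :=
  Real.Gamma_pos_of_pos (by positivity)

private lemma G_zero : Real.Gamma (((0 : ℕ) : ℝ) + 3/2) = Real.sqrt π / 2 := by
  have h : ((0 : ℕ) : ℝ) + 3/2 = 1/2 + 1 := by norm_num
  rw [h, Real.Gamma_add_one (by norm_num), Real.Gamma_one_half_eq]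
  ring

private lemma G_succ (k : ℕ) :
    Real.Gamma (((k + 1 : ℕ) : ℝ) + 3/2) = ((k : ℝ) + 3/2) * Real.Gamma ((k : ℝ) + 3/2) := by
  have h : ((k + 1 : ℕ) : ℝ) + 3/2 = ((k : ℝ) + 3/2) + 1 := by push_cast; ring
  rw [h, Real.Gamma_add_one (by positivity)]

private lemma G_ge (k : ℕ) :
    Real.sqrt π / 2 * k.factorial ≤ Real.Gamma ((k : ℝ) + 3/2) := by
  induction k with
  | zero => rw [G_zero]; simp
  | succ k ih =>
    rw [G_succ]
    calc Real.sqrt π / 2 * (k + 1).factorial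
        = ((k : ℝ) + 1) * (Real.sqrt π / 2 * k.factorial) := by
          rw [Nat.factorial_succ]; push_cast; ring
      _ ≤ ((k : ℝ) + 3/2) * Real.Gamma ((k : ℝ) + 3/2) := by
          apply mul_le_mul (by linarith) ih (by positivity)
          positivity

private lemma J_eq (a : ℝ) (k : ℕ) :
    ∫ t in (0:ℝ)..a, (a^2 - t^2)^k
      = Real.sqrt π / 2 * k.factorial / Real.Gamma ((k : ℝ) + 3/2) * a^(2*k+1) := by
  induction k with
  | zero =>
    rw [G_zero]
    have h : Real.sqrt π ≠ 0 := by positivity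
    simp
    field_simp
  | succ k ih =>
    -- FTC step
    have hder : ∀ t : ℝ, HasDerivAt (fun t : ℝ => t * (a^2 - t^2)^(k+1))
        ((2*(k:ℝ)+3) * (a^2 - t^2)^(k+1) - (2*(k:ℝ)+2) * a^2 * (a^2 - t^2)^k) t := by
      intro t
      have h1 : HasDerivAt (fun t : ℝ => a^2 - t^2) (-(2*t)) t := by
        simpa using (hasDerivAt_pow 2 t).const_sub (a^2)
      have h2 := h1.fun_pow (k+1)
      have h3 := (hasDerivAt_id t).fun_mul h2
      refine h3.congr_deriv ?_
      simp only [id_eq]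
      push_cast
      ring
    have hcont1 : Continuous fun t : ℝ => (a^2 - t^2)^(k+1) := by fun_prop
    have hcont0 : Continuous fun t : ℝ => (a^2 - t^2)^k := by fun_prop
    have hftc : ∫ t in (0:ℝ)..a,
        ((2*(k:ℝ)+3) * (a^2 - t^2)^(k+1) - (2*(k:ℝ)+2) * a^2 * (a^2 - t^2)^k)
        = a * (a^2 - a^2)^(k+1) - 0 * (a^2 - 0^2)^(k+1) := by
      apply integral_eq_sub_of_hasDerivAt (fun t _ => hder t)
      exact (((continuous_const.mul hcont1).sub
        ((continuous_const.mul continuous_const).mul hcont0)).intervalIntegrable _ _)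
    rw [integral_sub (f := fun t => (2*(k:ℝ)+3) * (a^2 - t^2)^(k+1))
        (g := fun t => (2*(k:ℝ)+2) * a^2 * (a^2 - t^2)^k)
        ((continuous_const.mul hcont1).intervalIntegrable _ _)
        (((continuous_const.mul continuous_const).mul hcont0).intervalIntegrable _ _),
      intervalIntegral.integral_const_mul, intervalIntegral.integral_const_mul] at hftc
    simp only [sub_self, zero_pow (Nat.succ_ne_zero k), mul_zero, zero_mul, sub_zero] at hftc
    -- hftc : (2k+3) * Js - (2k+2)*a^2 * J = 0
    have hJs : (2*(k:ℝ)+3) * ∫ t in (0:ℝ)..a, (a^2 - t^2)^(k+1)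
        = (2*(k:ℝ)+2) * a^2 * ∫ t in (0:ℝ)..a, (a^2 - t^2)^k := by linarith
    have h23 : (2*(k:ℝ)+3) ≠ 0 := by positivity
    have hGk : Real.Gamma ((k : ℝ) + 3/2) ≠ 0 := (G_pos k).ne'
    have hfac : (k.factorial : ℝ) ≠ 0 := Nat.cast_ne_zero.2 k.factorial_ne_zero
    have : (∫ t in (0:ℝ)..a, (a^2 - t^2)^(k+1))
        = (2*(k:ℝ)+2) * a^2 * (∫ t in (0:ℝ)..a, (a^2 - t^2)^k) / (2*(k:ℝ)+3) := by
      field_simp at hJs ⊢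
      linarith
    rw [this, ih, G_succ, Nat.factorial_succ]
    have hGk32 : ((k:ℝ) + 3/2) ≠ 0 := by positivity
    field_simp
    push_cast
    ring

private lemma partial_odd_le (a : ℝ) (ha : 0 ≤ a) (N : ℕ) :
    ∑ k ∈ Finset.range N, a^(2*k+1) / Real.Gamma ((k : ℝ) + 3/2) ≤ Real.exp (a^2) := by
  have hsqpi : (0:ℝ) < Real.sqrt π := Real.sqrt_pos.2 Real.pi_pos
  have hterm : ∀ k : ℕ, a^(2*k+1) / Real.Gamma ((k : ℝ) + 3/2)
      = 2 / Real.sqrt π * ∫ t in (0:ℝ)..a, (a^2 - t^2)^k / k.factorial := by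
    intro k
    rw [intervalIntegral.integral_div, J_eq]
    have hGk : Real.Gamma ((k : ℝ) + 3/2) ≠ 0 := (G_pos k).ne'
    have hfac : (k.factorial : ℝ) ≠ 0 := Nat.cast_ne_zero.2 k.factorial_ne_zero
    field_simp
  simp only [hterm]
  rw [← Finset.mul_sum]
  have hintk : ∀ k : ℕ, IntervalIntegrable (fun t : ℝ => (a^2 - t^2)^k / k.factorial)
      volume 0 a := by
    intro k
    exact (Continuous.div_const (by fun_prop) _).intervalIntegrable _ _
  rw [← intervalIntegral.integral_finset_sum (fun k _ => hintk k)]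
  have hmono : (∫ t in (0:ℝ)..a, ∑ k ∈ Finset.range N, (a^2 - t^2)^k / k.factorial)
      ≤ ∫ t in (0:ℝ)..a, Real.exp (a^2) * Real.exp (-t^2) := by
    have hcontsum : Continuous fun t : ℝ => ∑ k ∈ Finset.range N, (a^2 - t^2)^k / (k.factorial : ℝ) :=
      continuous_finset_sum _ (fun k _ => by fun_prop)
    have hcont2 : Continuous fun t : ℝ => Real.exp (a^2) * Real.exp (-t^2) := by fun_prop
    apply intervalIntegral.integral_mono_on ha
      (hcontsum.intervalIntegrable _ _) (hcont2.intervalIntegrable _ _)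
    intro t ht
    have h1 : t^2 ≤ a^2 := by
      rcases ht with ⟨ht0, hta⟩
      nlinarith
    have h2 : (0:ℝ) ≤ a^2 - t^2 := by linarith
    calc ∑ k ∈ Finset.range N, (a^2 - t^2)^k / k.factorial
        ≤ Real.exp (a^2 - t^2) := Real.sum_le_exp_of_nonneg h2 N
      _ = Real.exp (a^2) * Real.exp (-t^2) := by rw [← Real.exp_add, sub_eq_add_neg]
  have hgauss : (∫ t in (0:ℝ)..a, Real.exp (-t^2)) ≤ Real.sqrt π / 2 := by
    have hI : IntegrableOn (fun t : ℝ => Real.exp (-t^2)) (Set.Ioi 0) volume := by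
      have := (integrable_exp_neg_mul_sq (by norm_num : (0:ℝ) < 1)).integrableOn
        (s := Set.Ioi (0:ℝ))
      simpa using this
    rw [intervalIntegral.integral_of_le ha]
    calc (∫ t in Set.Ioc (0:ℝ) a, Real.exp (-t^2))
        ≤ ∫ t in Set.Ioi (0:ℝ), Real.exp (-t^2) := by
          apply setIntegral_mono_set hI
            (Filter.Eventually.of_forall fun t => (Real.exp_pos _).le)
            (Filter.Eventually.of_forall fun t ht => Set.Ioc_subset_Ioi_self ht)
      _ = Real.sqrt π / 2 := by
          have := integral_gaussian_Ioi 1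
          simpa using this
  calc 2 / Real.sqrt π * ∫ t in (0:ℝ)..a, ∑ k ∈ Finset.range N, (a^2 - t^2)^k / k.factorial
      ≤ 2 / Real.sqrt π * ∫ t in (0:ℝ)..a, Real.exp (a^2) * Real.exp (-t^2) := by
        apply mul_le_mul_of_nonneg_left hmono (by positivity)
    _ = 2 / Real.sqrt π * Real.exp (a^2) * ∫ t in (0:ℝ)..a, Real.exp (-t^2) := by
        rw [intervalIntegral.integral_const_mul]; ring
    _ ≤ 2 / Real.sqrt π * Real.exp (a^2) * (Real.sqrt π / 2) := by
        apply mul_le_mul_of_nonneg_left hgauss (by positivity)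
    _ = Real.exp (a^2) := by field_simp

theorem sum_pow_div_gamma_le (a : ℝ) (ha : 0 ≤ a) :
    Summable (fun n : ℕ => a ^ n / Real.Gamma ((n : ℝ) / 2 + 1)) ∧
      ∑' n : ℕ, a ^ n / Real.Gamma ((n : ℝ) / 2 + 1) ≤ 2 * Real.exp (a ^ 2) := by
  set f : ℕ → ℝ := fun n : ℕ => a ^ n / Real.Gamma ((n : ℝ) / 2 + 1) with hf
  have hcast_even : ∀ k : ℕ, ((2*k : ℕ) : ℝ) / 2 + 1 = (k : ℝ) + 1 := by
    intro k; push_cast; ring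
  have hcast_odd : ∀ k : ℕ, ((2*k+1 : ℕ) : ℝ) / 2 + 1 = (k : ℝ) + 3/2 := by
    intro k; push_cast; ring
  have heven : HasSum (fun k : ℕ => f (2*k)) (Real.exp (a^2)) := by
    have h0 : HasSum (fun k : ℕ => (a^2)^k / k.factorial) (Real.exp (a^2)) := by
      rw [Real.exp_eq_exp_ℝ, NormedSpace.exp_eq_tsum_div]
      exact (NormedSpace.expSeries_div_summable (a^2)).hasSum
    convert h0 using 2 with k
    rw [hf]
    simp only [hcast_even, Real.Gamma_nat_eq_factorial, pow_mul]
  have hodd_eq : ∀ k : ℕ, f (2*k+1) = a^(2*k+1) / Real.Gamma ((k : ℝ) + 3/2) := by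
    intro k; rw [hf]; simp only [hcast_odd]
  have hodd_nonneg : ∀ k : ℕ, 0 ≤ f (2*k+1) := by
    intro k
    rw [hodd_eq]
    exact div_nonneg (pow_nonneg ha _) (G_pos k).le
  have hodd_partial : ∀ N : ℕ, ∑ k ∈ Finset.range N, f (2*k+1) ≤ Real.exp (a^2) := by
    intro N
    simp only [hodd_eq]
    exact partial_odd_le a ha N
  have hodd_sum : Summable (fun k : ℕ => f (2*k+1)) :=
    summable_of_sum_range_le hodd_nonneg hodd_partial
  have hodd_le : ∑' k : ℕ, f (2*k+1) ≤ Real.exp (a^2) :=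
    Real.tsum_le_of_sum_range_le hodd_nonneg hodd_partial
  have hsum : Summable f := Summable.even_add_odd heven.summable hodd_sum
  refine ⟨hsum, ?_⟩
  rw [← tsum_even_add_odd heven.summable hodd_sum, heven.tsum_eq]
  linarith
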